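/- The symmetric decreasing rearrangement is non-expansive on nonnegative continuous compactly supported functions on ℝ: if f, g are nonnegative continuous functions with compact support on ℝ and f*, g* denote their symmetric decreasing rearrangements, then sup_x |f*(x) − g*(x)| ≤ sup_x |f(x) − g(x)|. -/

import Mathlib

/-!
`f* x` is the length of the set of levels `t > 0` whose superlevel set `{f > t}` is longer
than `2|x|`. If `f ≤ g + M`, then `{f > t} ⊆ {g > t - M}`, so every such level `t > M` of `f`
is, after shifting down by `M`, such a level of `g`. Hence the set of levels of `f` lies in
`(0, M]` together with a translate of that of `g`, and `f* x ≤ M + g* x`.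
-/

open MeasureTheory

/-- The symmetric decreasing rearrangement on ℝ, via the layer-cake formula:
f*(x) = ∫₀^∞ 1_{2|x| < |{f > t}|} dt. -/
noncomputable def sdr (f : ℝ → ℝ) (x : ℝ) : ℝ :=
  ∫ t in Set.Ioi (0:ℝ),
    if 2 * |x| < (volume {y : ℝ | t < f y}).toReal then (1:ℝ) else 0

open Set

section

variable {f g : ℝ → ℝ}

def sdrLevels (f : ℝ → ℝ) (x : ℝ) : Set ℝ :=
  {t | 0 < t ∧ 2 * |x| < (volume {y | t < f y}).toReal}

lemma measure_superlevel_ne_top (hf : HasCompactSupport f) {t : ℝ} (ht : 0 < t) :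
    volume {y | t < f y} ≠ ⊤ := by
  refine ne_top_of_le_ne_top hf.measure_lt_top.ne (measure_mono fun y hy => subset_tsupport f ?_)
  exact (ht.trans hy).ne'

lemma sdrLevels_ordConnected (hf : ∀ t, 0 < t → volume {y | t < f y} ≠ ⊤) (x : ℝ) :
    (sdrLevels f x).OrdConnected := by
  refine ⟨fun a ha b hb t ht => ⟨ha.1.trans_le ht.1, hb.2.trans_le ?_⟩⟩
  exact ENNReal.toReal_mono (hf t (ha.1.trans_le ht.1))
    (measure_mono fun y hy => ht.2.trans_lt hy)

lemma sdr_eq_measureReal_sdrLevels (hf : ∀ t, 0 < t → volume {y | t < f y} ≠ ⊤) (x : ℝ) :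
    sdr f x = volume.real (sdrLevels f x) := by
  have hind : (Ioi 0).indicator
      (fun t => if 2 * |x| < (volume {y | t < f y}).toReal then (1 : ℝ) else 0) =
      (sdrLevels f x).indicator 1 := by
    ext t
    by_cases ht : 0 < t <;> by_cases hx : 2 * |x| < (volume {y | t < f y}).toReal <;>
      simp [indicator, sdrLevels, ht, hx]
  rw [sdr, ← integral_indicator measurableSet_Ioi, hind,
    integral_indicator_one (sdrLevels_ordConnected hf x).measurableSet]

lemma sdrLevels_subset_Ioc {C : ℝ} (hC : ∀ y, f y ≤ C) (x : ℝ) :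
    sdrLevels f x ⊆ Ioc 0 C := by
  refine fun t ht => ⟨ht.1, not_lt.1 fun hCt => ?_⟩
  have hempty : {y | t < f y} = ∅ :=
    eq_empty_of_forall_notMem fun y hy => (hC y).not_gt (hCt.trans hy)
  have := ht.2
  rw [hempty, measure_empty, ENNReal.toReal_zero] at this
  exact this.not_ge (by positivity)

lemma measure_sdrLevels_ne_top (hf : BddAbove (range f)) (x : ℝ) :
    volume (sdrLevels f x) ≠ ⊤ := by
  obtain ⟨C, hC⟩ := hf
  refine ne_top_of_le_ne_top ?_ (measure_mono (sdrLevels_subset_Ioc (fun y => hC ⟨y, rfl⟩) x))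
  simp

lemma sdrLevels_subset_Ioc_union_preimage_sub (hg : ∀ t, 0 < t → volume {y | t < g y} ≠ ⊤)
    {M : ℝ} (hM : ∀ y, f y - g y ≤ M) (x : ℝ) :
    sdrLevels f x ⊆ Ioc 0 M ∪ (· - M) ⁻¹' sdrLevels g x := by
  intro t ht
  rcases le_or_gt t M with htM | htM
  · exact Or.inl ⟨ht.1, htM⟩
  · have hpos : 0 < t - M := sub_pos.2 htM
    refine Or.inr ⟨hpos, ht.2.trans_le (ENNReal.toReal_mono (hg _ hpos) (measure_mono ?_))⟩
    intro y (hy : t < f y)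
    show t - M < g y
    linarith [hM y]

lemma measure_sdrLevels_le (hg : ∀ t, 0 < t → volume {y | t < g y} ≠ ⊤)
    {M : ℝ} (hM : ∀ y, f y - g y ≤ M) (x : ℝ) :
    volume (sdrLevels f x) ≤ ENNReal.ofReal M + volume (sdrLevels g x) :=
  calc volume (sdrLevels f x)
      ≤ volume (Ioc 0 M ∪ (· - M) ⁻¹' sdrLevels g x) :=
        measure_mono (sdrLevels_subset_Ioc_union_preimage_sub hg hM x)
    _ ≤ volume (Ioc 0 M) + volume ((· - M) ⁻¹' sdrLevels g x) := measure_union_le _ _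
    _ = ENNReal.ofReal M + volume (sdrLevels g x) := by
        rw [Real.volume_Ioc, sub_zero]
        simp only [sub_eq_add_neg, measure_preimage_add_right]

theorem sdr_sub_le (hf : ∀ t, 0 < t → volume {y | t < f y} ≠ ⊤)
    (hg : ∀ t, 0 < t → volume {y | t < g y} ≠ ⊤) (hg_bdd : BddAbove (range g))
    {M : ℝ} (hM₀ : 0 ≤ M) (hM : ∀ y, f y - g y ≤ M) (x : ℝ) :
    sdr f x - sdr g x ≤ M := by
  have hg_fin := measure_sdrLevels_ne_top hg_bdd x
  have hle := ENNReal.toReal_mono (by finiteness) (measure_sdrLevels_le hg hM x)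
  rw [ENNReal.toReal_add ENNReal.ofReal_ne_top hg_fin, ENNReal.toReal_ofReal hM₀] at hle
  rw [sdr_eq_measureReal_sdrLevels hf, sdr_eq_measureReal_sdrLevels hg]
  exact sub_le_iff_le_add.2 hle

end

theorem sdr_nonexpansive_general (f g : ℝ → ℝ)
    (hfc : Continuous f) (hfs : HasCompactSupport f)
    (hgc : Continuous g) (hgs : HasCompactSupport g) :
    ∀ x, |sdr f x - sdr g x| ≤ ⨆ y, |f y - g y| := by
  intro x
  set M := ⨆ y, |f y - g y|
  have hbdd : BddAbove (range fun y => |f y - g y|) :=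
    (hfc.sub hgc).abs.bddAbove_range_of_hasCompactSupport (hfs.sub hgs).abs
  have hdiff (y : ℝ) : |f y - g y| ≤ M := le_ciSup hbdd y
  have hM₀ : 0 ≤ M := (abs_nonneg _).trans (hdiff 0)
  have hf_lev (t : ℝ) : 0 < t → volume {y | t < f y} ≠ ⊤ := measure_superlevel_ne_top hfs
  have hg_lev (t : ℝ) : 0 < t → volume {y | t < g y} ≠ ⊤ := measure_superlevel_ne_top hgs
  rw [abs_sub_le_iff]
  exact ⟨sdr_sub_le hf_lev hg_lev (hgc.bddAbove_range_of_hasCompactSupport hgs) hM₀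
      (fun y => (abs_sub_le_iff.1 (hdiff y)).1) x,
    sdr_sub_le hg_lev hf_lev (hfc.bddAbove_range_of_hasCompactSupport hfs) hM₀
      (fun y => (abs_sub_le_iff.1 (hdiff y)).2) x⟩

theorem sdr_nonexpansive (f g : ℝ → ℝ)
    (hfc : Continuous f) (hfs : HasCompactSupport f) (hf0 : ∀ x, 0 ≤ f x)
    (hgc : Continuous g) (hgs : HasCompactSupport g) (hg0 : ∀ x, 0 ≤ g x) :
    ∀ x, |sdr f x - sdr g x| ≤ ⨆ y, |f y - g y| :=
  sdr_nonexpansive_general f g hfc hfs hgc hgs
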